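/- The function G : [x_{ph}, ∞) → ℝ has exactly one zero x_{ms} in (x_{ph}, ∞); moreover G(x) < 0 for x_{ph} ≤ x < x_{ms} and G(x) > 0 for x > x_{ms}. -/

import Mathlib

/-!
Write `s = √(x − α²(1−β²))` and `q = 2s(s − αβ)`. Then `h(x) = x(x−1) − q`, so
`G = xΔ̄ − q²` and `G' = 3(2h − Δ̄) = 3(x² − α² − 2q)`. Wherever `G ≥ 0` we have
`(2q)² ≤ 4xΔ̄ < (x² − α²)²`, hence `G' > 0`: past `x_{ph}` the function `G` can only cross
zero upwards. Since `G(x_{ph}) = −x(x−1)³ − x(1−α²) < 0` and `G` is eventually positive,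
it crosses zero exactly once.
-/

open Real Filter Topology Set

noncomputable section

/-- `h(x) = x(x−3) + 2α²(1−β²) + 2αβ√(x − α²(1−β²))`. -/
def hfun (α β x : ℝ) : ℝ :=
  x * (x - 3) + 2 * α ^ 2 * (1 - β ^ 2) + 2 * α * β * Real.sqrt (x - α ^ 2 * (1 - β ^ 2))

/-- `G(x) = x·Δ̄(x) − [h(x) − x(x−1)]²`, with `Δ̄(x) = x² − 2x + α²`. -/
def Gfun (α β x : ℝ) : ℝ :=
  x * (x ^ 2 - 2 * x + α ^ 2) - (hfun α β x - x * (x - 1)) ^ 2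

/-- The effective potential `w_{α,β,λ}(x) = αβλ/x² + √(Δ̄(x)(1 + λ²/x²))`. -/
def wfun (α β lam x : ℝ) : ℝ :=
  α * β * lam / x ^ 2 + Real.sqrt ((x ^ 2 - 2 * x + α ^ 2) * (1 + lam ^ 2 / x ^ 2))

/-- `λ_{sph}(x) = x(√(x − α²(1−β²)) − αβ)/√(h(x))`. -/
def lamsph (α β x : ℝ) : ℝ :=
  x * (Real.sqrt (x - α ^ 2 * (1 - β ^ 2)) - α * β) / Real.sqrt (hfun α β x)

/-- `ε_{sph}(x) = (x² − 2x + α²(1−β²) + αβ√(x − α²(1−β²)))/(x√(h(x)))`. -/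
def epssph (α β x : ℝ) : ℝ :=
  (x ^ 2 - 2 * x + α ^ 2 * (1 - β ^ 2) + α * β * Real.sqrt (x - α ^ 2 * (1 - β ^ 2))) /
    (x * Real.sqrt (hfun α β x))

theorem pos_of_nonneg_of_deriv_pos {f f' : ℝ → ℝ} {w y : ℝ}
    (hf : ∀ x ∈ Icc w y, HasDerivAt f (f' x) x) (hf' : ∀ x ∈ Icc w y, 0 ≤ f x → 0 < f' x)
    (hw : 0 ≤ f w) (hwy : w < y) : 0 < f y := by
  have hcont : ContinuousOn f (Icc w y) := fun x hx => (hf x hx).continuousAt.continuousWithinAt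
  -- fencing `-f` by `0`: wherever `f` vanishes it is increasing, so it never drops below `0`
  have hnonneg : ∀ x ∈ Icc w y, 0 ≤ f x := by
    have := image_le_of_deriv_right_lt_deriv_boundary hcont.neg
      (fun x hx => (hf x (Ico_subset_Icc_self hx)).neg.hasDerivWithinAt) (neg_nonpos.2 hw)
      (fun _ => hasDerivAt_const _ (0 : ℝ))
      (fun x hx hfx => neg_neg_iff_pos.2 (hf' x (Ico_subset_Icc_self hx) (neg_eq_zero.1 hfx).ge))
    exact fun x hx => neg_nonpos.1 (this hx)
  have hmono : StrictMonoOn f (Icc w y) := by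
    refine strictMonoOn_of_deriv_pos (convex_Icc w y) hcont fun x hx => ?_
    rw [interior_Icc] at hx
    have hx' := Ioo_subset_Icc_self hx
    rw [(hf x hx').deriv]
    exact hf' x hx' (hnonneg x hx')
  calc 0 ≤ f w := hw
    _ < f y := hmono (left_mem_Icc.2 hwy.le) (right_mem_Icc.2 hwy.le) hwy

theorem exists_sign_change_of_deriv_pos {f f' : ℝ → ℝ} {a b : ℝ}
    (hcont : ContinuousOn f (Icc a b)) (hf : ∀ x ∈ Ioi a, HasDerivAt f (f' x) x)
    (hf' : ∀ x ∈ Ioi a, 0 ≤ f x → 0 < f' x) (ha : f a < 0) (hab : a < b) (hb : 0 < f b) :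
    ∃ z, a < z ∧ f z = 0 ∧ (∀ x, a ≤ x → x < z → f x < 0) ∧ ∀ x, z < x → 0 < f x := by
  have pos_of_nonneg {w y : ℝ} (haw : a < w) (hw : 0 ≤ f w) (hwy : w < y) : 0 < f y :=
    pos_of_nonneg_of_deriv_pos (fun x hx => hf x (haw.trans_le hx.1))
      (fun x hx => hf' x (haw.trans_le hx.1)) hw hwy
  obtain ⟨z, ⟨haz, -⟩, hz⟩ := intermediate_value_Ioo hab.le hcont ⟨ha, hb⟩
  refine ⟨z, haz, hz, fun x hax hxz => ?_, fun x hzx => pos_of_nonneg haz hz.ge hzx⟩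
  by_contra! hx
  rcases hax.eq_or_lt with rfl | hax
  · exact ha.not_ge hx
  · exact (pos_of_nonneg hax hx hxz).ne' hz

section

variable {α β : ℝ}

lemma Gfun_continuous : Continuous (Gfun α β) := by
  unfold Gfun hfun
  fun_prop

lemma hfun_eq_sub_sqrt {x : ℝ} (hx : α ^ 2 * (1 - β ^ 2) ≤ x) :
    hfun α β x = x * (x - 1) -
      2 * √(x - α ^ 2 * (1 - β ^ 2)) * (√(x - α ^ 2 * (1 - β ^ 2)) - α * β) := by
  unfold hfun
  linear_combination 2 * Real.sq_sqrt (sub_nonneg.2 hx)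

lemma hfun_hasDerivAt {x : ℝ} (hx : α ^ 2 * (1 - β ^ 2) < x) :
    HasDerivAt (hfun α β) (2 * x - 3 + α * β / √(x - α ^ 2 * (1 - β ^ 2))) x := by
  have hsqrt := ((hasDerivAt_id' x).sub_const (α ^ 2 * (1 - β ^ 2))).sqrt (sub_pos.2 hx).ne'
  refine ((((hasDerivAt_id' x).mul ((hasDerivAt_id' x).sub_const 3)).add_const
    (2 * α ^ 2 * (1 - β ^ 2))).add (hsqrt.const_mul (2 * α * β))).congr_deriv ?_
  field_simp
  ring

lemma Gfun_hasDerivAt {x : ℝ} (hx : α ^ 2 * (1 - β ^ 2) < x) :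
    HasDerivAt (Gfun α β) (3 * (2 * hfun α β x - (x ^ 2 - 2 * x + α ^ 2))) x := by
  have hΔ := (hasDerivAt_id' x).mul
    (((hasDerivAt_pow 2 x).sub ((hasDerivAt_id' x).const_mul 2)).add_const (α ^ 2))
  have hq := (hfun_hasDerivAt hx).sub ((hasDerivAt_id' x).mul ((hasDerivAt_id' x).sub_const 1))
  refine (hΔ.sub (hq.pow 2)).congr_deriv ?_
  have hs : 0 < √(x - α ^ 2 * (1 - β ^ 2)) := Real.sqrt_pos.2 (sub_pos.2 hx)
  simp only [Pi.sub_apply, Pi.mul_apply, hfun_eq_sub_sqrt hx.le]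
  field_simp
  linear_combination 4 * √(x - α ^ 2 * (1 - β ^ 2)) * Real.sq_sqrt (sub_pos.2 hx).le

lemma Gfun_eq_sub_sq {x : ℝ} (hx : α ^ 2 * (1 - β ^ 2) ≤ x) :
    Gfun α β x = x * (x ^ 2 - 2 * x + α ^ 2) -
      (2 * √(x - α ^ 2 * (1 - β ^ 2)) * (√(x - α ^ 2 * (1 - β ^ 2)) - α * β)) ^ 2 := by
  rw [Gfun, hfun_eq_sub_sqrt hx]
  ring

lemma lt_two_mul_hfun_of_Gfun_nonneg {x : ℝ} (hα : α ^ 2 ≤ 1) (hx : 1 < x) (hG : 0 ≤ Gfun α β x) :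
    x ^ 2 - 2 * x + α ^ 2 < 2 * hfun α β x := by
  have hcx : α ^ 2 * (1 - β ^ 2) ≤ x := by nlinarith [sq_nonneg α, sq_nonneg β]
  set q := 2 * √(x - α ^ 2 * (1 - β ^ 2)) * (√(x - α ^ 2 * (1 - β ^ 2)) - α * β)
  have hq : (2 * q) ^ 2 < (x ^ 2 - α ^ 2) ^ 2 := by
    have hG' : q ^ 2 ≤ x * (x ^ 2 - 2 * x + α ^ 2) := by rw [Gfun_eq_sub_sq hcx] at hG; linarith
    -- `(x² − α²)² − 4xΔ̄ = (x − 1)⁴ + (1 − α²)(2x² + 4x − 1 − α²)`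
    have hpos : 0 < 2 * x ^ 2 + 4 * x - 1 - α ^ 2 := by nlinarith
    nlinarith [pow_pos (sub_pos.2 hx) 4, mul_nonneg (sub_nonneg.2 hα) hpos.le]
  have h2q : 2 * q < x ^ 2 - α ^ 2 :=
    (le_abs_self _).trans_lt (abs_lt_of_sq_lt_sq hq (by nlinarith))
  rw [hfun_eq_sub_sqrt hcx]
  linarith

lemma Gfun_neg_of_hfun_eq_zero {x : ℝ} (hα : α ^ 2 ≤ 1) (hx : 1 < x) (h : hfun α β x = 0) :
    Gfun α β x < 0 := by
  have hG : Gfun α β x = -(x * ((x - 1) ^ 3 + (1 - α ^ 2))) := by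
    rw [Gfun, h]
    ring
  rw [hG, neg_neg_iff_pos]
  have := pow_pos (sub_pos.2 hx) 3
  exact mul_pos (by linarith) (by linarith)

lemma Gfun_pos_of_eleven_le {x : ℝ} (hα : α ^ 2 ≤ 1) (hβ : β ^ 2 ≤ 1) (hx : 11 ≤ x) :
    0 < Gfun α β x := by
  have hc : 0 ≤ α ^ 2 * (1 - β ^ 2) := mul_nonneg (sq_nonneg α) (sub_nonneg.2 hβ)
  have hcx : α ^ 2 * (1 - β ^ 2) ≤ x := by nlinarith [mul_nonneg (sq_nonneg α) (sq_nonneg β)]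
  have hαβ : (α * β) ^ 2 ≤ 1 := by rw [mul_pow]; exact mul_le_one₀ hα (sq_nonneg β) hβ
  set s := √(x - α ^ 2 * (1 - β ^ 2))
  have hs : s ^ 2 ≤ x := by rw [Real.sq_sqrt (sub_nonneg.2 hcx)]; linarith
  have hsub : (s - α * β) ^ 2 ≤ 2 * x + 2 := by nlinarith [sq_nonneg (s + α * β)]
  have hq : (2 * s * (s - α * β)) ^ 2 ≤ 8 * x * (x + 1) := by
    have := mul_le_mul hs hsub (sq_nonneg _) (by linarith)
    nlinarith
  rw [Gfun_eq_sub_sq hcx]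
  nlinarith [sq_nonneg α]

end

theorem Gfun_unique_zero_general (α β : ℝ) (hα0 : 0 ≤ α) (hα1 : α < 1)
    (hβ0 : -1 ≤ β) (hβ1 : β ≤ 1)
    (xph : ℝ)
    (hph1 : 1 + Real.sqrt (1 - α ^ 2) < xph) (hph2 : hfun α β xph = 0) :
    ∃ xms : ℝ, xph < xms ∧ Gfun α β xms = 0 ∧
      (∀ x : ℝ, xph ≤ x → x < xms → Gfun α β x < 0) ∧
      (∀ x : ℝ, xms < x → 0 < Gfun α β x) := by
  have hα : α ^ 2 ≤ 1 := by nlinarith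
  have hβ : β ^ 2 ≤ 1 := by nlinarith
  have hxph : 1 < xph := by linarith [Real.sqrt_nonneg (1 - α ^ 2)]
  have hc : α ^ 2 * (1 - β ^ 2) < xph := by nlinarith [mul_nonneg (sq_nonneg α) (sq_nonneg β)]
  exact exists_sign_change_of_deriv_pos (b := max (xph + 1) 11) Gfun_continuous.continuousOn
    (fun x hx => Gfun_hasDerivAt (hc.trans hx))
    (fun x hx hG => by linarith [lt_two_mul_hfun_of_Gfun_nonneg hα (hxph.trans hx) hG])
    (Gfun_neg_of_hfun_eq_zero hα hxph hph2) (lt_max_of_lt_left (lt_add_one xph))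
    (Gfun_pos_of_eleven_le hα hβ (le_max_right _ _))

/-- The function `G` has exactly one zero `x_{ms}` in `(x_{ph}, ∞)`; it is
strictly negative on `[x_{ph}, x_{ms})` and strictly positive on `(x_{ms}, ∞)`.
Here `x_{ph}` is the unique zero of `h` in `(x₊, ∞)`. -/
theorem Gfun_unique_zero (α β : ℝ) (hα0 : 0 ≤ α) (hα1 : α < 1)
    (hβ0 : -1 ≤ β) (hβ1 : β ≤ 1)
    (xph : ℝ)
    (hph1 : 1 + Real.sqrt (1 - α ^ 2) < xph) (hph2 : hfun α β xph = 0)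
    (hph3 : ∀ x : ℝ, 1 + Real.sqrt (1 - α ^ 2) < x → x < xph → hfun α β x < 0)
    (hph4 : ∀ x : ℝ, xph < x → 0 < hfun α β x) :
    ∃ xms : ℝ, xph < xms ∧ Gfun α β xms = 0 ∧
      (∀ x : ℝ, xph ≤ x → x < xms → Gfun α β x < 0) ∧
      (∀ x : ℝ, xms < x → 0 < Gfun α β x) :=
  Gfun_unique_zero_general α β hα0 hα1 hβ0 hβ1 xph hph1 hph2

end
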